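/- arXiv:1802.00719 — 2 statements merged into one kernel-verified Lean document; each statement's English description precedes it below -/
import Mathlib

section
/- Let s > 2 be real and let p be a real number with sin p ≠ 0. Then Σ_{k=1}^∞ k^{−s} λ_k(p,p) = 4ζ(s−1) − 2·(cos p/sin p)·Σ_{k=1}^∞ sin(kp)/k^s − 2·Σ_{k=1}^∞ cos(kp)/k^{s−1}. -/
noncomputable section

open Real

/-- Fourier symbol of the `k`-path Laplacian of the square lattice `ℤ²`. -/
def lamk (k : ℕ) (p q : ℝ) : ℝ :=
  4 * k - 2 * ∑ j ∈ Finset.range k,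
    (Real.cos (((k : ℝ) - j) * p + j * q) + Real.cos (((k : ℝ) - j) * q - j * p))

/-- The symbol of the Mellin-transformed `k`-path Laplacian. -/
def lamM (s : ℝ) (p q : ℝ) : ℝ := ∑' k : ℕ, lamk (k + 1) p q / ((k : ℝ) + 1) ^ s

/-
On the diagonal `q = p` the symbol splits into `k` copies of `cos (k p)` and the Dirichlet-type
kernel `∑ cos ((k - 2j) p) = cos p · sin (k p) / sin p`, which telescopes after multiplication by
`sin p`. Dividing by `k ^ s` and summing, the three resulting series are absolutely convergent for
`s > 2`; the first one is `ζ(s - 1)`.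
-/

theorem sin_mul_sum_range_cos_sub_two_mul (k : ℕ) (p : ℝ) :
    Real.sin p * ∑ j ∈ Finset.range k, Real.cos (((k : ℝ) - 2 * j) * p)
      = Real.cos p * Real.sin (k * p) := by
  set f : ℕ → ℝ := fun j => Real.sin (((k : ℝ) - 2 * j + 1) * p)
  have htelescope :
      ∀ j : ℕ, 2 * Real.sin p * Real.cos (((k : ℝ) - 2 * j) * p) = f j - f (j + 1) := by
    intro j
    simp only [f, Nat.cast_succ]
    rw [show ((k : ℝ) - 2 * j + 1) * p = ((k : ℝ) - 2 * j) * p + p by ring,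
      show ((k : ℝ) - 2 * (j + 1) + 1) * p = ((k : ℝ) - 2 * j) * p - p by ring,
      Real.sin_add, Real.sin_sub]
    ring
  have hsum : 2 * Real.sin p * ∑ j ∈ Finset.range k, Real.cos (((k : ℝ) - 2 * j) * p)
      = f 0 - f k := by
    rw [Finset.mul_sum, Finset.sum_congr rfl fun j _ => htelescope j, Finset.sum_range_sub']
  have hends : f 0 - f k = 2 * (Real.cos p * Real.sin (k * p)) := by
    simp only [f, Nat.cast_zero]
    rw [show ((k : ℝ) - 2 * 0 + 1) * p = k * p + p by ring,
      show ((k : ℝ) - 2 * k + 1) * p = p - k * p by ring, Real.sin_add, Real.sin_sub]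
    ring
  linarith

theorem lamk_self (k : ℕ) (p : ℝ) :
    lamk k p p = 4 * k - 2 * (k * Real.cos (k * p))
      - 2 * ∑ j ∈ Finset.range k, Real.cos (((k : ℝ) - 2 * j) * p) := by
  have hterm : ∀ j ∈ Finset.range k,
      Real.cos (((k : ℝ) - j) * p + j * p) + Real.cos (((k : ℝ) - j) * p - j * p)
        = Real.cos (k * p) + Real.cos (((k : ℝ) - 2 * j) * p) := by
    intro j _
    ring_nf
  rw [lamk, Finset.sum_congr rfl hterm, Finset.sum_add_distrib, Finset.sum_const,
    Finset.card_range, nsmul_eq_mul]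
  ring

theorem lamk_self_of_sin_ne_zero (k : ℕ) {p : ℝ} (hp : Real.sin p ≠ 0) :
    lamk k p p = 4 * k - 2 * (k * Real.cos (k * p))
      - 2 * (Real.cos p / Real.sin p * Real.sin (k * p)) := by
  have hkernel : ∑ j ∈ Finset.range k, Real.cos (((k : ℝ) - 2 * j) * p)
      = Real.cos p / Real.sin p * Real.sin (k * p) := by
    rw [div_mul_eq_mul_div, eq_div_iff hp]
    linear_combination sin_mul_sum_range_cos_sub_two_mul k p
  rw [lamk_self, hkernel]

theorem summable_div_nat_add_one_rpow {f : ℕ → ℝ} {C s : ℝ} (hf : ∀ k, |f k| ≤ C)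
    (hs : 1 < s) : Summable fun k : ℕ => f k / ((k : ℝ) + 1) ^ s := by
  have hpseries : Summable fun k : ℕ => C * (1 / ((k : ℝ) + 1) ^ s) := by
    refine Summable.mul_left C ?_
    exact_mod_cast (summable_nat_add_iff 1).mpr (summable_one_div_nat_rpow.mpr hs)
  refine hpseries.of_norm_bounded fun k => ?_
  have hk : 0 < ((k : ℝ) + 1) ^ s := by positivity
  rw [Real.norm_eq_abs, abs_div, abs_of_pos hk, mul_one_div]
  exact div_le_div_of_nonneg_right (hf k) hk.le

theorem riemannZeta_ofReal_eq_tsum {t : ℝ} (ht : 1 < t) :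
    riemannZeta t = ((∑' k : ℕ, 1 / ((k : ℝ) + 1) ^ t : ℝ) : ℂ) := by
  rw [zeta_eq_tsum_one_div_nat_add_one_cpow (by simpa using ht), Complex.ofReal_tsum]
  refine tsum_congr fun k => ?_
  rw [Complex.ofReal_div, Complex.ofReal_one, Complex.ofReal_cpow (by positivity)]
  push_cast
  rfl

theorem lamk_succ_self_div_rpow (k : ℕ) (s : ℝ) {p : ℝ} (hp : Real.sin p ≠ 0) :
    lamk (k + 1) p p / ((k : ℝ) + 1) ^ s
      = 4 * (1 / ((k : ℝ) + 1) ^ (s - 1))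
        - 2 * (Real.cos p / Real.sin p * (Real.sin (((k : ℝ) + 1) * p) / ((k : ℝ) + 1) ^ s))
        - 2 * (Real.cos (((k : ℝ) + 1) * p) / ((k : ℝ) + 1) ^ (s - 1)) := by
  have hk : ((k : ℝ) + 1) ≠ 0 := by positivity
  rw [lamk_self_of_sin_ne_zero (k + 1) hp, Real.rpow_sub_one hk]
  push_cast
  field_simp
  ring

theorem lamM_self {s : ℝ} (hs : 2 < s) {p : ℝ} (hp : Real.sin p ≠ 0) :
    lamM s p p
      = 4 * ∑' k : ℕ, 1 / ((k : ℝ) + 1) ^ (s - 1)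
        - 2 * (Real.cos p / Real.sin p
            * ∑' k : ℕ, Real.sin (((k : ℝ) + 1) * p) / ((k : ℝ) + 1) ^ s)
        - 2 * ∑' k : ℕ, Real.cos (((k : ℝ) + 1) * p) / ((k : ℝ) + 1) ^ (s - 1) := by
  have hzeta := summable_div_nat_add_one_rpow (f := fun _ => 1) (fun _ => abs_one.le)
    (by linarith : 1 < s - 1)
  have hsin := summable_div_nat_add_one_rpow (fun k => abs_sin_le_one (((k : ℝ) + 1) * p))
    (by linarith : 1 < s)
  have hcos := summable_div_nat_add_one_rpow (fun k => abs_cos_le_one (((k : ℝ) + 1) * p))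
    (by linarith : 1 < s - 1)
  rw [lamM, tsum_congr fun k => lamk_succ_self_div_rpow k s hp]
  exact (((hzeta.hasSum.mul_left 4).sub ((hsin.hasSum.mul_left _).mul_left 2)).sub
    (hcos.hasSum.mul_left 2)).tsum_eq

theorem stmt5 (s : ℝ) (hs : 2 < s) (p : ℝ) (h : Real.sin p ≠ 0) :
    ((lamM s p p : ℝ) : ℂ)
      = 4 * riemannZeta ((s : ℂ) - 1)
        - 2 * ((Real.cos p / Real.sin p
            * ∑' k : ℕ, Real.sin (((k : ℝ) + 1) * p) / ((k : ℝ) + 1) ^ s : ℝ) : ℂ)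
        - 2 * ((∑' k : ℕ, Real.cos (((k : ℝ) + 1) * p) / ((k : ℝ) + 1) ^ (s - 1) : ℝ) : ℂ) := by
  rw [lamM_self hs h, show (s : ℂ) - 1 = ((s - 1 : ℝ) : ℂ) by push_cast; rfl,
    riemannZeta_ofReal_eq_tsum (by linarith)]
  push_cast
  rfl
end
end

section
/- Let k ≥ 1 be an integer. Then there exist δ > 0 and C > 0 such that for all p, q ∈ [−δ,δ], |λ_k(p,q) − ((2k³ + k)/3)·(p² + q²)| ≤ C·(p⁴ + q⁴); i.e., λ_k(p,q) = ((2k³+k)/3)(p²+q²) + O(p⁴+q⁴) as p, q → 0. -/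
noncomputable section

open Real

/-! Every cosine equals `1 - x ^ 2 / 2` up to a remainder in `[0, x ^ 4 / 2]`, for all real `x`.
The quadratic parts sum exactly to the main term, because
`((k - j) p + j q) ^ 2 + ((k - j) q - j p) ^ 2 = ((k - j) ^ 2 + j ^ 2) (p ^ 2 + q ^ 2)`, and every
argument is at most `k * max |p| |q|` in absolute value, so the error is at most
`2 k ^ 5 (p ^ 4 + q ^ 4)` for all `p, q`. -/

def cosRemainder (x : ℝ) : ℝ := cos x - (1 - x ^ 2 / 2)

lemma cosRemainder_nonneg (x : ℝ) : 0 ≤ cosRemainder x :=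
  sub_nonneg.2 one_sub_sq_div_two_le_cos

lemma cosRemainder_le (x : ℝ) : cosRemainder x ≤ x ^ 4 / 2 := by
  unfold cosRemainder
  rcases le_total |x| 1 with hx | hx
  · have := (abs_le.1 (cos_bound hx)).2
    rw [pow_abs, abs_of_nonneg (by positivity)] at this
    nlinarith [pow_two_nonneg (x ^ 2)]
  · have : 1 ≤ x ^ 2 := by nlinarith [sq_abs x, abs_nonneg x]
    nlinarith [cos_le_one x]

lemma sum_range_sub_sq_add_sq (x : ℝ) (n : ℕ) :
    ∑ j ∈ Finset.range n, ((x - j) ^ 2 + (j : ℝ) ^ 2)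
      = n * x ^ 2 - n * (n - 1) * x + n * (n - 1) * (2 * n - 1) / 3 := by
  induction n with
  | zero => simp
  | succ n ih => rw [Finset.sum_range_succ, ih]; push_cast; ring

lemma sum_range_sq_add_sq_eq (k : ℕ) (p q : ℝ) :
    ∑ j ∈ Finset.range k,
        ((((k : ℝ) - j) * p + j * q) ^ 2 + (((k : ℝ) - j) * q - j * p) ^ 2)
      = (2 * (k : ℝ) ^ 3 + k) / 3 * (p ^ 2 + q ^ 2) := by
  have hterm : ∀ j ∈ Finset.range k,
      (((k : ℝ) - j) * p + j * q) ^ 2 + (((k : ℝ) - j) * q - j * p) ^ 2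
        = (((k : ℝ) - j) ^ 2 + (j : ℝ) ^ 2) * (p ^ 2 + q ^ 2) := fun _ _ => by ring
  rw [Finset.sum_congr rfl hterm, ← Finset.sum_mul, sum_range_sub_sq_add_sq]
  ring

lemma lamk_eq_sub_sum_cosRemainder (k : ℕ) (p q : ℝ) :
    lamk k p q = (2 * (k : ℝ) ^ 3 + k) / 3 * (p ^ 2 + q ^ 2)
      - 2 * ∑ j ∈ Finset.range k,
        (cosRemainder (((k : ℝ) - j) * p + j * q)
          + cosRemainder (((k : ℝ) - j) * q - j * p)) := by
  have hconst : 4 * (k : ℝ) = ∑ _j ∈ Finset.range k, 4 := by simp [mul_comm]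
  rw [← sum_range_sq_add_sq_eq, lamk, hconst]
  simp only [cosRemainder, Finset.mul_sum, ← Finset.sum_sub_distrib]
  exact Finset.sum_congr rfl fun _ _ => by ring

lemma add_mul_pow_four_le {s t : ℝ} (hs : 0 ≤ s) (ht : 0 ≤ t) (p q : ℝ) :
    (s * p + t * q) ^ 4 ≤ (s + t) ^ 4 * (p ^ 4 + q ^ 4) := by
  have hm : 0 ≤ max |p| |q| := (abs_nonneg p).trans (le_max_left _ _)
  have habs : |s * p + t * q| ≤ (s + t) * max |p| |q| := calc
    |s * p + t * q| ≤ s * |p| + t * |q| := by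
      simpa [abs_mul, abs_of_nonneg hs, abs_of_nonneg ht] using abs_add_le (s * p) (t * q)
    _ ≤ (s + t) * max |p| |q| := by
      nlinarith [le_max_left |p| |q|, le_max_right |p| |q|]
  have hm4 : max |p| |q| ^ 4 ≤ p ^ 4 + q ^ 4 := by
    rcases max_choice |p| |q| with h | h <;> rw [h, pow_abs, abs_of_nonneg (by positivity)] <;>
      nlinarith [pow_two_nonneg (p ^ 2), pow_two_nonneg (q ^ 2)]
  calc (s * p + t * q) ^ 4 = |s * p + t * q| ^ 4 := by
        rw [pow_abs, abs_of_nonneg (by positivity)]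
    _ ≤ ((s + t) * max |p| |q|) ^ 4 := pow_le_pow_left₀ (abs_nonneg _) habs 4
    _ = (s + t) ^ 4 * max |p| |q| ^ 4 := mul_pow _ _ _
    _ ≤ (s + t) ^ 4 * (p ^ 4 + q ^ 4) := by gcongr

lemma abs_lamk_sub_le (k : ℕ) (p q : ℝ) :
    |lamk k p q - (2 * (k : ℝ) ^ 3 + k) / 3 * (p ^ 2 + q ^ 2)|
      ≤ 2 * (k : ℝ) ^ 5 * (p ^ 4 + q ^ 4) := by
  set S := ∑ j ∈ Finset.range k,
    (cosRemainder (((k : ℝ) - j) * p + j * q) + cosRemainder (((k : ℝ) - j) * q - j * p))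
  have hS : 0 ≤ S := Finset.sum_nonneg fun _ _ =>
    add_nonneg (cosRemainder_nonneg _) (cosRemainder_nonneg _)
  have hterm : ∀ j ∈ Finset.range k,
      cosRemainder (((k : ℝ) - j) * p + j * q) + cosRemainder (((k : ℝ) - j) * q - j * p)
        ≤ (k : ℝ) ^ 4 * (p ^ 4 + q ^ 4) := by
    intro j hj
    have hjk : (j : ℝ) ≤ k := by exact_mod_cast (Finset.mem_range.1 hj).le
    have ha := add_mul_pow_four_le (sub_nonneg.2 hjk) j.cast_nonneg p q
    have hb := add_mul_pow_four_le (sub_nonneg.2 hjk) j.cast_nonneg q (-p)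
    rw [sub_add_cancel] at ha hb
    rw [Even.neg_pow (by decide), mul_neg, ← sub_eq_add_neg, add_comm (q ^ 4)] at hb
    nlinarith [cosRemainder_le (((k : ℝ) - j) * p + j * q),
      cosRemainder_le (((k : ℝ) - j) * q - j * p)]
  have hSle : S ≤ (k : ℝ) ^ 5 * (p ^ 4 + q ^ 4) := calc
    S ≤ ∑ _j ∈ Finset.range k, (k : ℝ) ^ 4 * (p ^ 4 + q ^ 4) := Finset.sum_le_sum hterm
    _ = (k : ℝ) ^ 5 * (p ^ 4 + q ^ 4) := by
      rw [Finset.sum_const, Finset.card_range, nsmul_eq_mul]; ring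
  rw [lamk_eq_sub_sum_cosRemainder, sub_sub_cancel_left, abs_neg, abs_of_nonneg (by linarith)]
  linarith

theorem stmt19 (k : ℕ) (hk : 1 ≤ k) :
    ∃ δ > (0 : ℝ), ∃ C > (0 : ℝ), ∀ p q : ℝ,
      p ∈ Set.Icc (-δ) δ → q ∈ Set.Icc (-δ) δ →
        |lamk k p q - (2 * (k : ℝ) ^ 3 + k) / 3 * (p ^ 2 + q ^ 2)|
          ≤ C * (p ^ 4 + q ^ 4) :=
  ⟨1, one_pos, 2 * (k : ℝ) ^ 5, by positivity, fun p q _ _ => abs_lamk_sub_le k p q⟩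
end
end
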